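/- Let p_1, …, p_m be nonzero polynomials with complex coefficients, let p = ∏_{k=1}^m p_k, and let n = deg p. Then ∏_{k=1}^m ‖p_k‖_D ≤ e^n ‖p‖_D, where D = {z ∈ ℂ : |z| ≤ 1} is the closed unit disk and e is Euler's number. -/

import Mathlib

/-!
The Mahler measure `M` is multiplicative, and on the closed unit disk
`M(q) ≤ ‖q‖ ≤ 2 ^ (deg q) * M(q)`: the first by Landau's inequality `M(q)² ≤ ∑ ‖aᵢ‖²` and
Parseval's identity on the unit circle, the second because `‖aᵢ‖ ≤ C(deg q, i) * M(q)`. Hence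
`∏ ‖pₖ‖ ≤ 2 ^ n * ∏ M(pₖ) = 2 ^ n * M(p) ≤ 2 ^ n * ‖p‖`, and `2 ≤ e`.
-/

open Polynomial Set Metric

/-- The sup norm of a polynomial on a set `E ⊆ ℂ`. -/
noncomputable def polyNorm (E : Set ℂ) (p : Polynomial ℂ) : ℝ :=
  ⨆ z : E, ‖p.eval (z : ℂ)‖

namespace Polynomial

theorem norm_eval_le_sum_range_norm_coeff (p : ℂ[X]) {z : ℂ} (hz : ‖z‖ ≤ 1) :
    ‖p.eval z‖ ≤ ∑ i ∈ Finset.range (p.natDegree + 1), ‖p.coeff i‖ := by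
  rw [eval_eq_sum_range]
  refine norm_sum_le_of_le _ fun i _ => ?_
  rw [norm_mul, norm_pow]
  exact mul_le_of_le_one_right (norm_nonneg _) (pow_le_one₀ (norm_nonneg z) hz)

theorem sum_range_norm_coeff_le_two_pow_mul_mahlerMeasure (p : ℂ[X]) :
    ∑ i ∈ Finset.range (p.natDegree + 1), ‖p.coeff i‖ ≤ 2 ^ p.natDegree * p.mahlerMeasure :=
  calc ∑ i ∈ Finset.range (p.natDegree + 1), ‖p.coeff i‖
      ≤ ∑ i ∈ Finset.range (p.natDegree + 1), (p.natDegree.choose i : ℝ) * p.mahlerMeasure :=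
        Finset.sum_le_sum fun i _ => p.norm_coeff_le_choose_mul_mahlerMeasure i
    _ = 2 ^ p.natDegree * p.mahlerMeasure := by
        rw [← Finset.sum_mul, ← Nat.cast_sum, Nat.sum_range_choose, Nat.cast_pow, Nat.cast_ofNat]

theorem mahlerMeasure_prod {ι : Type*} (s : Finset ι) (p : ι → ℂ[X]) :
    (∏ i ∈ s, p i).mahlerMeasure = ∏ i ∈ s, (p i).mahlerMeasure := by
  rw [Finset.prod_eq_multiset_prod, prod_mahlerMeasure_eq_mahlerMeasure_prod, Multiset.map_map]
  rfl

end Polynomial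

theorem polyNorm_nonneg (E : Set ℂ) (p : ℂ[X]) : 0 ≤ polyNorm E p :=
  Real.iSup_nonneg fun _ => norm_nonneg _

section

variable {E : Set ℂ}

theorem norm_eval_le_polyNorm (hE : IsCompact E) (p : ℂ[X]) {z : ℂ} (hz : z ∈ E) :
    ‖p.eval z‖ ≤ polyNorm E p := by
  have hbdd := hE.bddAbove_image (f := fun z => ‖p.eval z‖) (by fun_prop)
  rw [image_eq_range] at hbdd
  exact le_ciSup hbdd ⟨z, hz⟩

theorem polyNorm_le {p : ℂ[X]} {C : ℝ} (h : ∀ z ∈ E, ‖p.eval z‖ ≤ C) (hC : 0 ≤ C) :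
    polyNorm E p ≤ C :=
  Real.iSup_le (fun z => h z z.2) hC

theorem polyNorm_le_two_pow_natDegree_mul_mahlerMeasure (hE : E ⊆ closedBall 0 1) (p : ℂ[X]) :
    polyNorm E p ≤ 2 ^ p.natDegree * p.mahlerMeasure :=
  polyNorm_le
    (fun z hz => (p.norm_eval_le_sum_range_norm_coeff (mem_closedBall_zero_iff.1 (hE hz))).trans
      p.sum_range_norm_coeff_le_two_pow_mul_mahlerMeasure)
    (by positivity [p.mahlerMeasure_nonneg])

theorem mahlerMeasure_le_polyNorm (hE : IsCompact E) (hsphere : sphere 0 1 ⊆ E) (p : ℂ[X]) :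
    p.mahlerMeasure ≤ polyNorm E p :=
  calc p.mahlerMeasure ≤ √(∑ i ∈ p.support, ‖p.coeff i‖ ^ 2) :=
        p.mahlerMeasure_le_sqrt_sum_sq_norm_coeff
    _ = √(Real.circleAverage (fun z => ‖p.eval z‖ ^ 2) 0 1) := by
        rw [p.sum_sq_norm_coeff_eq_circleAverage]
    _ ≤ √(polyNorm E p ^ 2) := by
        gcongr
        refine Real.circleAverage_mono_on_of_le_circle
          (by fun_prop : Continuous fun z => ‖p.eval z‖ ^ 2).continuousOn.circleIntegrable'
          fun z hz => ?_
        gcongr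
        exact norm_eval_le_polyNorm hE p (hsphere (by simpa using hz))
    _ = polyNorm E p := Real.sqrt_sq (polyNorm_nonneg E p)

end

theorem gelfond_inequality (m : ℕ) (p : Fin m → Polynomial ℂ) (hp : ∀ k, p k ≠ 0) :
    ∏ k, polyNorm (closedBall (0:ℂ) 1) (p k) ≤
      Real.exp 1 ^ (∏ k, p k).natDegree * polyNorm (closedBall (0:ℂ) 1) (∏ k, p k) := by
  have two_le_exp_one : (2 : ℝ) ≤ Real.exp 1 := by linarith [Real.add_one_le_exp 1]
  calc ∏ k, polyNorm (closedBall (0:ℂ) 1) (p k)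
      ≤ ∏ k, (2 ^ (p k).natDegree * (p k).mahlerMeasure) :=
        Finset.prod_le_prod (fun k _ => polyNorm_nonneg _ _)
          fun k _ => polyNorm_le_two_pow_natDegree_mul_mahlerMeasure subset_rfl (p k)
    _ = 2 ^ (∏ k, p k).natDegree * (∏ k, p k).mahlerMeasure := by
        rw [Finset.prod_mul_distrib, Finset.prod_pow_eq_pow_sum,
          natDegree_prod _ _ fun k _ => hp k, mahlerMeasure_prod]
    _ ≤ Real.exp 1 ^ (∏ k, p k).natDegree * polyNorm (closedBall (0:ℂ) 1) (∏ k, p k) := by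
        gcongr
        · exact (∏ k, p k).mahlerMeasure_nonneg
        · exact mahlerMeasure_le_polyNorm (isCompact_closedBall 0 1) sphere_subset_closedBall _
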